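/- Let P be a real Banach space. The Mackey topology m(P*, P) on P* is complete (as a topological vector space / uniform space). -/

import Mathlib

open Topology

/-- The weak topology on a normed space `Y`, i.e. `w(Y, Y*)`. -/
noncomputable def weakTop (Y : Type*) [NormedAddCommGroup Y] [NormedSpace ℝ Y] :
    TopologicalSpace Y :=
  inferInstanceAs (TopologicalSpace (WeakSpace ℝ Y))

/-- The Mackey uniformity `m(P*, P)` on the norm dual of `P`: the uniformity of uniform
convergence on weakly compact, convex, balanced (circled) subsets of `P`. -/
noncomputable def mackeyUniformity (P : Type*) [NormedAddCommGroup P] [NormedSpace ℝ P] :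
    UniformSpace (StrongDual ℝ P) :=
  UniformSpace.comap
    (fun f => UniformOnFun.ofFun
      {K : Set P | @IsCompact P (weakTop P) K ∧ Convex ℝ K ∧ Balanced ℝ K} (f : P → ℝ))
    inferInstance

/-!
Every norm-compact subset `K` of the Banach space `P` lies in a member of the Mackey family, namely
its closed absolutely convex hull, which is norm-compact (this needs completeness) and
hence weakly compact. So the Mackey uniformity is the uniformity of uniform convergence on a family
of sets covering `P` and coherent with its topology (`P` is metrizable, hence compactly generated),
and for such families the space of continuous linear maps into a complete space is complete.
-/

theorem IsCompact.exists_isCompact_absConvex_superset {E : Type*} [AddCommGroup E] [Module ℝ E]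
    [UniformSpace E] [IsUniformAddGroup E] [ContinuousSMul ℝ E] [LocallyConvexSpace ℝ E]
    [QuasiCompleteSpace ℝ E] {K : Set E} (hK : IsCompact K) :
    ∃ L, IsCompact L ∧ AbsConvex ℝ L ∧ K ⊆ L :=
  ⟨closedAbsConvexHull ℝ K, isCompact_closedAbsConvexHull_of_totallyBounded hK.totallyBounded,
    absConvex_convexClosedHull, subset_closedAbsConvexHull⟩

theorem IsCompact.isCompact_weakTop {P : Type*} [NormedAddCommGroup P] [NormedSpace ℝ P]
    {K : Set P} (hK : IsCompact K) : @IsCompact P (weakTop P) K :=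
  Set.image_id K ▸ @IsCompact.image P P _ (weakTop P) K id hK (toWeakSpaceCLM ℝ P).continuous

section Mackey

variable {P : Type*} [NormedAddCommGroup P] [NormedSpace ℝ P]

variable (P) in
def mackeySets : Set (Set P) :=
  {K : Set P | @IsCompact P (weakTop P) K ∧ Convex ℝ K ∧ Balanced ℝ K}

theorem mackeyUniformity_eq :
    mackeyUniformity P =
      UniformConvergenceCLM.instUniformSpace (RingHom.id ℝ) ℝ (mackeySets P) := by
  rw [UniformConvergenceCLM.uniformSpace_eq]
  rfl

variable [CompleteSpace P]

theorem IsCompact.exists_mem_mackeySets_superset {K : Set P} (hK : IsCompact K) :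
    ∃ L ∈ mackeySets P, K ⊆ L := by
  obtain ⟨L, hL, ⟨hLbal, hLconv⟩, hKL⟩ := hK.exists_isCompact_absConvex_superset
  exact ⟨L, ⟨hL.isCompact_weakTop, hLconv, hLbal⟩, hKL⟩

theorem isCoherentWith_mackeySets : IsCoherentWith (mackeySets P) :=
  CompactlyCoherentSpace.isCoherentWith.enlarge fun _ hK ↦ hK.exists_mem_mackeySets_superset

theorem sUnion_mackeySets : ⋃₀ mackeySets P = Set.univ :=
  Set.eq_univ_of_forall fun x ↦
    let ⟨L, hL, hxL⟩ := (isCompact_singleton (x := x)).exists_mem_mackeySets_superset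
    ⟨L, hL, hxL rfl⟩

end Mackey

/-- The Mackey topology `m(P*, P)` on the dual of a Banach space is complete. -/
theorem stmt8 {P : Type*} [NormedAddCommGroup P] [NormedSpace ℝ P] [CompleteSpace P] :
    @CompleteSpace (StrongDual ℝ P) (mackeyUniformity P) := by
  rw [mackeyUniformity_eq]
  exact UniformConvergenceCLM.completeSpace _ _ isCoherentWith_mackeySets sUnion_mackeySets
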